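/- Let E ∈ M_n(ℝ) be tropically idempotent (E ⊗ E = E). Then every diagonal entry of E is ≤ 0, and E has maximum cycle mean equal to 0; consequently 0 is the unique tropical eigenvalue of E, with eigenspace equal to the tropical column space C(E). -/

import Mathlib

open Finset

/-- Tropical (max-plus) matrix multiplication on n × n real matrices. -/
noncomputable def tmul {n : ℕ} [NeZero n] (A B : Matrix (Fin n) (Fin n) ℝ) :
    Matrix (Fin n) (Fin n) ℝ :=
  fun i j => univ.sup' univ_nonempty (fun k => A i k + B k j)

/-- Tropical action of a matrix on a vector: (A ⊗ x)_i = max_k (A_{i,k} + x_k). -/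
noncomputable def tvec {n : ℕ} [NeZero n] (A : Matrix (Fin n) (Fin n) ℝ) (x : Fin n → ℝ) :
    Fin n → ℝ :=
  fun i => univ.sup' univ_nonempty (fun k => A i k + x k)

/-- Weight of the cycle c 0 → c 1 → ⋯ → c k → c 0 in the weighted digraph of A. -/
noncomputable def cycleWeight {n k : ℕ} (A : Matrix (Fin n) (Fin n) ℝ)
    (c : Fin (k + 1) → Fin n) : ℝ :=
  ∑ i, A (c i) (c (i + 1))

section Aux
variable {n : ℕ} [NeZero n] {E : Matrix (Fin n) (Fin n) ℝ}

lemma trop_tri (hE : tmul E E = E) (i j k : Fin n) : E i k + E k j ≤ E i j := by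
  conv_rhs => rw [← hE]
  exact Finset.le_sup' (fun k => E i k + E k j) (mem_univ k)

lemma trop_attain (hE : tmul E E = E) (i j : Fin n) : ∃ k, E i k + E k j = E i j := by
  obtain ⟨k, -, hk⟩ := Finset.exists_mem_eq_sup' univ_nonempty (fun k => E i k + E k j)
  exact ⟨k, by rw [← hk]; exact (congrFun (congrFun hE i) j)⟩

lemma trop_diag (hE : tmul E E = E) (i : Fin n) : E i i ≤ 0 := by
  have := trop_tri hE i i i; linarith

/-- Path inequality: the weight of any walk is at most the corresponding entry. -/
lemma trop_path (hE : tmul E E = E) (p : ℕ → Fin n) :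
    ∀ m : ℕ, ∑ j ∈ range (m + 1), E (p j) (p (j + 1)) ≤ E (p 0) (p (m + 1)) := by
  intro m
  induction m with
  | zero => simp
  | succ m ih =>
      rw [Finset.sum_range_succ]
      calc (∑ j ∈ range (m + 1), E (p j) (p (j + 1))) + E (p (m + 1)) (p (m + 2))
          ≤ E (p 0) (p (m + 1)) + E (p (m + 1)) (p (m + 2)) := by linarith
        _ ≤ E (p 0) (p (m + 2)) := trop_tri hE _ _ _

open Fin.NatCast in
lemma trop_cycle_sum {k : ℕ} (c : Fin (k + 1) → Fin n) (p : ℕ → Fin n)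
    (hp : ∀ m, m ≤ k + 1 → c (m : Fin (k + 1)) = p m) :
    cycleWeight E c = ∑ j ∈ range (k + 1), E (p j) (p (j + 1)) := by
  rw [cycleWeight, ← Fin.sum_univ_eq_sum_range (fun m => E (p m) (p (m + 1)))]
  apply Finset.sum_congr rfl
  intro i _
  have h1 : c i = p i.val := by
    have := hp i.val (le_of_lt i.isLt); rwa [Fin.cast_val_eq_self] at this
  have h2 : c (i + 1) = p (i.val + 1) := by
    rcases Nat.lt_or_ge (i.val + 1) (k + 1) with h | h
    · have := hp (i.val + 1) (le_of_lt h)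
      rwa [Nat.cast_add, Nat.cast_one, Fin.cast_val_eq_self] at this
    · have hik : i.val = k := by omega
      have := hp (k + 1) le_rfl
      have hz : ((k + 1 : ℕ) : Fin (k + 1)) = 0 := by
        simp [Fin.natCast_self]
      rw [hz] at this
      have h0 : i + 1 = 0 := by
        apply Fin.ext
        simp [Fin.add_def, hik]
      rw [h0, this, hik]
  rw [h1, h2]

lemma sup'_add_const {α : Type*} (s : Finset α) (h : s.Nonempty) (f : α → ℝ) (a : ℝ) :
    s.sup' h (fun k => f k + a) = s.sup' h f + a := by
  apply le_antisymm
  · exact Finset.sup'_le _ _ fun k hk => add_le_add_left (Finset.le_sup' f hk) a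
  · rw [← le_sub_iff_add_le]
    exact Finset.sup'_le _ _ fun k hk =>
      le_sub_iff_add_le.mpr (Finset.le_sup' (fun k => f k + a) hk)

lemma trop_fix (hE : tmul E E = E) (x : Fin n → ℝ) (i : Fin n) :
    tvec E (tvec E x) i = tvec E x i := by
  apply le_antisymm
  · apply Finset.sup'_le
    intro k _
    rw [show tvec E x k = univ.sup' univ_nonempty (fun m => E k m + x m) from rfl,
      add_comm, ← le_sub_iff_add_le]
    apply Finset.sup'_le
    intro m _
    rw [le_sub_iff_add_le]
    have h1 := trop_tri hE i m k
    have h2 : E i m + x m ≤ tvec E x i := Finset.le_sup' (fun m => E i m + x m) (mem_univ m)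
    linarith
  · apply Finset.sup'_le
    intro m _
    obtain ⟨k, hk⟩ := trop_attain hE i m
    have h2 : E k m + x m ≤ tvec E x k := Finset.le_sup' (fun m => E k m + x m) (mem_univ m)
    calc E i m + x m = E i k + (E k m + x m) := by linarith
      _ ≤ E i k + tvec E x k := by linarith
      _ ≤ tvec E (tvec E x) i :=
          Finset.le_sup' (fun k => E i k + tvec E x k) (mem_univ k)

end Aux

/-- For a tropically idempotent E ∈ M_n(ℝ): every diagonal entry is ≤ 0; the
maximum cycle mean is 0; 0 is the unique tropical eigenvalue; and the
eigenspace of 0 equals the tropical column space C(E) (the set of tropical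
linear combinations of the columns, i.e. the range of x ↦ E ⊗ x). -/
theorem idempotent_diag_cycle_eigen {n : ℕ} [NeZero n]
    (E : Matrix (Fin n) (Fin n) ℝ) (hE : tmul E E = E) :
    (∀ i, E i i ≤ 0) ∧
    (∀ (k : ℕ) (c : Fin (k + 1) → Fin n), cycleWeight E c / (k + 1) ≤ 0) ∧
    (∃ (k : ℕ) (c : Fin (k + 1) → Fin n), cycleWeight E c / (k + 1) = 0) ∧
    (∀ (lam : ℝ) (x : Fin n → ℝ), (∀ i, tvec E x i = lam + x i) → lam = 0) ∧
    ({x : Fin n → ℝ | tvec E x = x} = Set.range (tvec E)) := by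
  refine ⟨trop_diag hE, ?_, ?_, ?_, ?_⟩
  · -- every cycle mean ≤ 0
    intro k c
    apply div_nonpos_of_nonpos_of_nonneg
    · have hsum := trop_cycle_sum (E := E) c (fun m => c (open Fin.NatCast in (m : Fin (k + 1))))
        (fun m _ => rfl)
      rw [hsum]
      have hpath := trop_path hE (fun m => c (open Fin.NatCast in (m : Fin (k + 1)))) k
      have hz : (open Fin.NatCast in ((k + 1 : ℕ) : Fin (k + 1))) = 0 := by simp [Fin.natCast_self]
      simp only [hz, Nat.cast_zero] at hpath
      calc _ ≤ E (c 0) (c 0) := by simpa using hpath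
        _ ≤ 0 := trop_diag hE _
    · positivity
  · -- a cycle of mean 0 exists
    classical
    set i0 : Fin n := ⟨0, Nat.pos_of_ne_zero (NeZero.ne n)⟩ with hi0
    have hstep : ∀ y : Fin n, ∃ k, E y k + E k i0 = E y i0 := fun y => trop_attain hE y i0
    choose step hstepEq using hstep
    set p : ℕ → Fin n := fun m => step^[m] i0 with hp
    have hpsucc : ∀ m, p (m + 1) = step (p m) := fun m => Function.iterate_succ_apply' step m i0
    have hedge : ∀ m, E (p m) (p (m + 1)) = E (p m) i0 - E (p (m + 1)) i0 := by
      intro m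
      have := hstepEq (p m)
      rw [hpsucc m]
      linarith
    have key : ∀ s t : ℕ, s < t → p s = p t →
        ∃ (k : ℕ) (c : Fin (k + 1) → Fin n), cycleWeight E c / ((k : ℝ) + 1) = 0 := by
      intro s t hlt hpb0
      set k := t - s - 1 with hk
      have hbk : t = s + (k + 1) := by omega
      have hpb : p s = p (s + (k + 1)) := by rw [← hbk]; exact hpb0
      refine ⟨k, fun j => p (s + j.val), ?_⟩
      have hcyc : (∀ j : Fin (k + 1),
          p (s + (j + 1).val) = p (s + j.val + 1)) := by
        intro j
        rcases Nat.lt_or_ge (j.val + 1) (k + 1) with h | h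
        · have : (j + 1).val = j.val + 1 := by
            simp [Fin.add_def, Nat.mod_eq_of_lt h]
          rw [this, ← Nat.add_assoc]
        · have hjk : j.val = k := by omega
          have h0 : (j + 1).val = 0 := by simp [Fin.add_def, hjk]
          rw [h0, Nat.add_zero, hpb, hjk, ← Nat.add_assoc]
      have hsum : cycleWeight E (fun j : Fin (k+1) => p (s + j.val)) =
          ∑ m ∈ range (k + 1), E (p (s + m)) (p (s + m + 1)) := by
        rw [cycleWeight, ← Fin.sum_univ_eq_sum_range (fun m => E (p (s + m)) (p (s + m + 1)))]
        exact Finset.sum_congr rfl fun j _ => by rw [hcyc j]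

      have htel : ∑ m ∈ range (k + 1), E (p (s + m)) (p (s + m + 1)) =
          E (p s) i0 - E (p (s + (k + 1))) i0 := by
        have h0 := Finset.sum_range_sub' (fun m => E (p (s + m)) i0) (k + 1)
        simp only [Nat.add_zero] at h0
        rw [← h0]
        exact Finset.sum_congr rfl fun m _ => hedge (s + m)
      rw [hsum, htel, ← hpb, sub_self, zero_div]
    -- pigeonhole on p 0, ..., p n
    obtain ⟨a, b, hab, heq⟩ := Fintype.exists_ne_map_eq_of_card_lt
      (fun j : Fin (n + 1) => p j.val) (by simp)
    rcases (Fin.val_ne_iff.mpr hab).lt_or_gt with hlt | hlt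
    · exact key a.val b.val hlt heq
    · exact key b.val a.val hlt heq.symm
  · -- eigenvalue is 0
    intro lam x h
    have hfx : tvec E x = fun i => lam + x i := funext h
    have i0 : Fin n := ⟨0, Nat.pos_of_ne_zero (NeZero.ne n)⟩
    have h1 : tvec E (tvec E x) i0 = lam + x i0 := by rw [trop_fix hE x i0, h i0]
    have h2 : tvec E (tvec E x) i0 = lam + (lam + x i0) := by
      rw [show tvec E (tvec E x) i0 =
          univ.sup' univ_nonempty (fun k => E i0 k + tvec E x k) from rfl]
      simp only [hfx]
      have : (fun k => E i0 k + (lam + x k)) = fun k => (E i0 k + x k) + lam := by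
        funext k; ring
      rw [this, sup'_add_const]
      rw [show univ.sup' univ_nonempty (fun k => E i0 k + x k) = tvec E x i0 from rfl, h i0]
      ring
    have := h1.symm.trans h2
    linarith
  · -- eigenspace = column space
    ext x
    simp only [Set.mem_setOf_eq, Set.mem_range]
    constructor
    · intro h; exact ⟨x, h⟩
    · rintro ⟨y, rfl⟩
      funext i
      exact trop_fix hE y i
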